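/- arXiv:1405.6289 — 9 statements merged into one kernel-verified Lean document; each statement's English description precedes it below -/
import Mathlib

section
/- Every Krasnoselskiĭ contracting self-map of a metric space is Matkowski contracting: if f : X → X satisfies sup_{a ≤ t ≤ b} ω_f(t)/t < 1 for all 0 < a < b < ∞, then lim_{n→∞} ω_f^n(t) = 0 for all t > 0. -/
/-! With `ω = osc f`, we have `ω s ≤ s`, so the iterates `ω^[n] t` decrease to some limit
`L ≤ t`. If `L > 0`, the Krasnoselskiĭ bound on `[L, t + 1]` gives a constant `c < 1` with
`ω^[n+1] t ≤ c * ω^[n] t`, and passing to the limit yields `L ≤ c * L < L`. -/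

open Filter Topology ENNReal

noncomputable def osc {X : Type*} [MetricSpace X] (f : X → X) (t : ℝ≥0∞) : ℝ≥0∞ :=
  ⨆ (x : X) (y : X) (_ : edist x y ≤ t), edist (f x) (f y)

theorem osc_zero {X : Type*} [MetricSpace X] (f : X → X) : osc f 0 = 0 := by
  refine le_antisymm (iSup₂_le fun x y => iSup_le fun hxy => ?_) bot_le
  rw [nonpos_iff_eq_zero, edist_eq_zero] at hxy
  simp [hxy]

theorem Function.antitone_iterate_of_le_self {α : Type*} [Preorder α] {g : α → α} {t : α}
    (h : ∀ s ≤ t, g s ≤ s) : Antitone fun n => g^[n] t := by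
  have iterate_le : ∀ n, g^[n] t ≤ t := by
    intro n
    induction n with
    | zero => exact le_rfl
    | succ n ih => rw [Function.iterate_succ_apply']; exact (h _ ih).trans ih
  refine antitone_nat_of_succ_le fun n => ?_
  rw [Function.iterate_succ_apply']
  exact h _ (iterate_le n)

namespace ENNReal

variable {g : ℝ≥0∞ → ℝ≥0∞}

theorem le_iSup_div_mul_of_mem_Icc {a b s : ℝ≥0∞} (hs : s ∈ Set.Icc a b) (hs₀ : s ≠ 0)
    (hs_top : s ≠ ⊤) : g s ≤ (⨆ t ∈ Set.Icc a b, g t / t) * s :=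
  (ENNReal.div_le_iff hs₀ hs_top).1 (le_iSup₂ (f := fun t _ => g t / t) s hs)

theorem le_self_of_iSup_div_lt_one (hg₀ : g 0 = 0)
    (hK : ∀ a b : ℝ≥0∞, 0 < a → a < b → b ≠ ⊤ → (⨆ t ∈ Set.Icc a b, g t / t) < 1)
    {s : ℝ≥0∞} (hs_top : s ≠ ⊤) : g s ≤ s := by
  rcases eq_or_ne s 0 with rfl | hs₀
  · exact hg₀.le
  have hs_lt : s < s + 1 := ENNReal.lt_add_right hs_top one_ne_zero
  calc g s ≤ (⨆ t ∈ Set.Icc s (s + 1), g t / t) * s :=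
        le_iSup_div_mul_of_mem_Icc ⟨le_rfl, hs_lt.le⟩ hs₀ hs_top
    _ ≤ 1 * s := by
        gcongr
        exact (hK s (s + 1) (pos_iff_ne_zero.2 hs₀) hs_lt (add_ne_top.2 ⟨hs_top, one_ne_top⟩)).le
    _ = s := one_mul s

theorem tendsto_iterate_zero_of_iSup_div_lt_one (hg₀ : g 0 = 0)
    (hK : ∀ a b : ℝ≥0∞, 0 < a → a < b → b ≠ ⊤ → (⨆ t ∈ Set.Icc a b, g t / t) < 1)
    {t : ℝ≥0∞} (ht_top : t ≠ ⊤) : Tendsto (fun n => g^[n] t) atTop (𝓝 0) := by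
  have anti : Antitone fun n => g^[n] t := Function.antitone_iterate_of_le_self
    fun s hs => le_self_of_iSup_div_lt_one hg₀ hK (ne_top_of_le_ne_top ht_top hs)
  set L := ⨅ n, g^[n] t
  suffices L = 0 from this ▸ tendsto_atTop_iInf anti
  by_contra hL₀
  have hL_top : L ≠ ⊤ := ne_top_of_le_ne_top ht_top (iInf_le _ 0)
  have ht_lt : t < t + 1 := ENNReal.lt_add_right ht_top one_ne_zero
  set c := ⨆ s ∈ Set.Icc L (t + 1), g s / s
  have hc : c < 1 := hK L (t + 1) (pos_iff_ne_zero.2 hL₀)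
    ((iInf_le _ 0).trans_lt ht_lt) (add_ne_top.2 ⟨ht_top, one_ne_top⟩)
  have step : ∀ n, g^[n + 1] t ≤ c * g^[n] t := by
    intro n
    have mem : g^[n] t ∈ Set.Icc L (t + 1) :=
      ⟨iInf_le _ n, (anti (Nat.zero_le n)).trans ht_lt.le⟩
    rw [Function.iterate_succ_apply']
    exact le_iSup_div_mul_of_mem_Icc mem (ne_bot_of_le_ne_bot hL₀ mem.1)
      (ne_top_of_le_ne_top ht_top (anti (Nat.zero_le n)))
  have hL_le : L ≤ c * L :=
    le_of_tendsto_of_tendsto' ((tendsto_atTop_iInf anti).comp (tendsto_add_atTop_nat 1))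
      (ENNReal.Tendsto.const_mul (tendsto_atTop_iInf anti) (Or.inr (hc.trans one_lt_top).ne))
      step
  have hcL : c * L < L := by simpa using (ENNReal.mul_lt_mul_iff_left hL₀ hL_top).2 hc
  exact hL_le.not_gt hcL

end ENNReal

/-- Every Krasnoselskiĭ contracting self-map of a metric space is Matkowski contracting. -/
theorem krasnoselskii_implies_matkowski {X : Type*} [MetricSpace X] (f : X → X)
    (hK : ∀ a b : ℝ≥0∞, 0 < a → a < b → b ≠ ⊤ → (⨆ t ∈ Set.Icc a b, osc f t / t) < 1) :
    ∀ t : ℝ≥0∞, 0 < t → t ≠ ⊤ → Tendsto (fun n => (osc f)^[n] t) atTop (𝓝 0) :=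
  fun _ _ ht_top => ENNReal.tendsto_iterate_zero_of_iSup_div_lt_one (osc_zero f) hK ht_top
end

section
/- If f : X → X is a self-map of a metric space (X,d) such that lim_{n→∞} ω_{f^n}(t) = 0 for every t > 0 (eventually contracting), then for every x ∈ X the orbit sequence (f^n(x))_{n∈ω} is a Cauchy sequence in (X,d). -/
open Filter Topology ENNReal

/-! Once `f^[k]` maps `ε`-close points to `ε/2`-close points and the first `k` steps of the
orbit of `x` stay within `ε/2` of `x`, strong induction on `j`, via
`d(x, f^[k+i] x) ≤ d(x, f^[k] x) + d(f^[k] x, f^[k] (f^[i] x))`, keeps the whole orbit within `ε`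
of `x`. Eventual contraction provides such a `k`, and the second condition then holds at every
late enough point `f^[N] x` of the orbit, because `d(f^[N] x, f^[N] y) ≤ ω_{f^N}(d(x, y)) → 0`
for each of the finitely many `y = f^[i] x`, `i ≤ k`. -/

section

variable {X : Type*} [MetricSpace X]

lemma edist_le_osc (g : X → X) {t : ℝ≥0∞} {x y : X} (h : edist x y ≤ t) :
    edist (g x) (g y) ≤ osc g t :=
  le_iSup_of_le x <| le_iSup_of_le y <| le_iSup_of_le h le_rfl

lemma tendsto_edist_iterate_of_tendsto_osc {f : X → X} {t : ℝ≥0∞}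
    (h : Tendsto (fun n => osc (f^[n]) t) atTop (𝓝 0)) {x y : X} (hxy : edist x y ≤ t) :
    Tendsto (fun n => edist (f^[n] x) (f^[n] y)) atTop (𝓝 0) :=
  tendsto_of_tendsto_of_tendsto_of_le_of_le tendsto_const_nhds h (fun _ => zero_le)
    fun n => edist_le_osc (f^[n]) hxy

lemma edist_iterate_le_of_osc_le {f : X → X} {x : X} {k : ℕ} (hk : 0 < k) {a b ε : ℝ≥0∞}
    (hab : a + b ≤ ε) (hx : ∀ i ≤ k, edist x (f^[i] x) ≤ a) (hosc : osc (f^[k]) ε ≤ b)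
    (j : ℕ) : edist x (f^[j] x) ≤ ε := by
  induction j using Nat.strong_induction_on with
  | _ j ih =>
    rcases le_or_gt j k with hjk | hkj
    · exact (hx j hjk).trans (le_self_add.trans hab)
    · obtain ⟨i, rfl⟩ := Nat.exists_eq_add_of_le hkj.le
      calc edist x (f^[k + i] x)
          ≤ edist x (f^[k] x) + edist (f^[k] x) (f^[k] (f^[i] x)) := by
            rw [Function.iterate_add_apply]; exact edist_triangle _ _ _
        _ ≤ a + b := add_le_add (hx k le_rfl)
            ((edist_le_osc _ (ih i (by omega))).trans hosc)
        _ ≤ ε := hab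

end

/-- If `f` is eventually contracting (the oscillations of the iterates of `f` tend to zero),
then every orbit of `f` is a Cauchy sequence. -/
theorem orbit_cauchySeq_of_eventually_contracting {X : Type*} [MetricSpace X] (f : X → X)
    (hev : ∀ t : ℝ≥0∞, 0 < t → t ≠ ⊤ → Tendsto (fun n => osc (f^[n]) t) atTop (𝓝 0))
    (x : X) : CauchySeq (fun n => f^[n] x) := by
  rw [EMetric.cauchySeq_iff']
  intro ε hε
  obtain ⟨δ, hδ, hδε⟩ := exists_between hε
  have hδ2 : 0 < δ / 2 := ENNReal.half_pos hδ.ne'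
  obtain ⟨k, hosc, hk⟩ : ∃ k, osc (f^[k]) δ < δ / 2 ∧ 0 < k :=
    (((hev δ hδ hδε.ne_top).eventually (gt_mem_nhds hδ2)).and (eventually_gt_atTop 0)).exists
  have hnear : ∀ i ∈ Set.Iic k, ∀ᶠ n in atTop, edist (f^[n] x) (f^[i] (f^[n] x)) ≤ δ / 2 := by
    intro i _
    have ht : 0 < edist x (f^[i] x) + 1 := by positivity
    filter_upwards [(tendsto_edist_iterate_of_tendsto_osc (hev _ ht (by simp)) le_self_add
      ).eventually (eventually_le_nhds hδ2)] with n hn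
    rwa [(Function.Commute.iterate_iterate_self f i n).eq]
  obtain ⟨N, hN⟩ := ((eventually_all_finite (Set.finite_Iic k)).2 hnear).exists
  refine ⟨N, fun n hn => ?_⟩
  obtain ⟨j, rfl⟩ := Nat.exists_eq_add_of_le hn
  rw [edist_comm, add_comm, Function.iterate_add_apply]
  exact (edist_iterate_le_of_osc_le hk (ENNReal.add_halves δ).le hN hosc.le j).trans_lt hδε
end

section
/- If F is a finite family of continuous self-maps of a complete metric space (X,d) such that the family oscillations satisfy lim_{n→∞} dω_{F^n}(t) = 0 for all t > 0 (F is eventually contracting), then there exists a nonempty compact set K ⊆ X with F(K) ⊆ K, where F(K) = ⋃_{f∈F} f(K). -/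
open Filter Topology ENNReal

/-- The set `F^n` of all compositions of `n` members of a family `F` of self-maps. -/
def comps {X : Type*} (F : Set (X → X)) : ℕ → Set (X → X)
  | 0 => {id}
  | n + 1 => Set.image2 (· ∘ ·) (comps F n) F

/-- The oscillation of a family `G` of self-maps of a metric space. -/
noncomputable def oscFam {X : Type*} [MetricSpace X] (G : Set (X → X)) (t : ℝ≥0∞) : ℝ≥0∞ :=
  ⨆ g ∈ G, ⨆ (x : X) (y : X) (_ : edist x y ≤ t), edist (g x) (g y)

/-!
The Hutchinson operator `Φ K = ⋃ f ∈ F, f '' K` on nonempty compact sets with the Hausdorff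
metric satisfies `d_H (Φⁿ A) (Φⁿ B) ≤ dω_{Fⁿ} (d_H A B)`, so it is eventually contracting itself.
Orbits of an eventually contracting map `T` are Cauchy: far along an orbit, at `z = Tᴹ x`, the
first `N` steps move `z` by at most `1/2`, while `T^N` maps the unit ball about `z` into the ball
of radius `1/2` about `T^N z`; hence the whole orbit of `z` stays in the unit ball about `z`,
and then `Tⁿ` contracts all pairs of its points uniformly. The union of a Hausdorff-Cauchy
sequence of compact sets is totally bounded, so the closure of the union of the orbit of a
singleton under `Φ` is compact, and it is `F`-invariant because the union is.
-/

open Set Function Metric TopologicalSpace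

theorem iterate_mem_of_mapsTo_iterate {α : Type*} {f : α → α} {s : Set α} {N : ℕ} (hN : 0 < N)
    (hs : MapsTo f^[N] s s) {x : α} (hx : ∀ m < N, f^[m] x ∈ s) (m : ℕ) : f^[m] x ∈ s := by
  induction m using Nat.strong_induction_on with
  | _ m ih =>
    rcases lt_or_ge m N with hm | hm
    · exact hx m hm
    · obtain ⟨k, rfl⟩ := exists_add_of_le hm
      rw [iterate_add_apply]
      exact hs (ih k (by omega))

-- For a single map, the paper's condition `dω_{Tⁿ}(t) → 0` without the supremum.
def EventuallyContracting {Y : Type*} [PseudoEMetricSpace Y] (T : Y → Y) : Prop :=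
  ∀ t ≠ ∞, ∀ ε > 0, ∀ᶠ n in atTop, ∀ x y, edist x y ≤ t → edist (T^[n] x) (T^[n] y) < ε

namespace EventuallyContracting

variable {Y : Type*} [PseudoMetricSpace Y] {T : Y → Y}

theorem tendsto_edist_iterate (hT : EventuallyContracting T) (x y : Y) :
    Tendsto (fun n => edist (T^[n] x) (T^[n] y)) atTop (𝓝 0) :=
  ENNReal.tendsto_nhds_zero.2 fun ε hε =>
    (hT _ (edist_ne_top x y) ε hε).mono fun _ hn => (hn x y le_rfl).le

theorem exists_forall_ge_edist_iterate_le_one (hT : EventuallyContracting T) (x : Y) :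
    ∃ M, ∀ n ≥ M, edist (T^[n] x) (T^[M] x) ≤ 1 := by
  obtain ⟨N, hN0, hN⟩ := ((eventually_gt_atTop 0).and (hT 1 one_ne_top 2⁻¹ (by simp))).exists
  obtain ⟨M, hM⟩ := ((finite_Iic N).eventually_all.2 fun m _ =>
    (hT.tendsto_edist_iterate (T^[m] x) x).eventually_le_const
      (by simp : (0 : ℝ≥0∞) < 2⁻¹)).exists
  have hcomm : ∀ m, T^[m] (T^[M] x) = T^[M] (T^[m] x) := fun m => by
    rw [← iterate_add_apply, ← iterate_add_apply, add_comm]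
  have hmaps : MapsTo T^[N] (closedEBall (T^[M] x) 1) (closedEBall (T^[M] x) 1) := fun w hw =>
    calc edist (T^[N] w) (T^[M] x)
        ≤ edist (T^[N] w) (T^[N] (T^[M] x)) + edist (T^[N] (T^[M] x)) (T^[M] x) :=
          edist_triangle _ _ _
      _ ≤ 2⁻¹ + 2⁻¹ := add_le_add (hN w _ hw).le (hcomm N ▸ hM N (self_mem_Iic))
      _ = 1 := ENNReal.inv_two_add_inv_two
  have hstart : ∀ m < N, T^[m] (T^[M] x) ∈ closedEBall (T^[M] x) 1 := fun m hm =>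
    (hcomm m ▸ hM m hm.le).trans (by simp)
  refine ⟨M, fun n hn => ?_⟩
  obtain ⟨k, rfl⟩ := exists_add_of_le hn
  rw [add_comm, iterate_add_apply]
  exact iterate_mem_of_mapsTo_iterate hN0 hmaps hstart k

theorem cauchySeq_iterate (hT : EventuallyContracting T) (x : Y) :
    CauchySeq fun n => T^[n] x := by
  refine EMetric.cauchySeq_iff'.2 fun ε hε => ?_
  obtain ⟨M, hM⟩ := hT.exists_forall_ge_edist_iterate_le_one x
  obtain ⟨k, hk⟩ := (hT 1 one_ne_top ε hε).exists
  refine ⟨k + M, fun n hn => ?_⟩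
  obtain ⟨j, rfl⟩ := exists_add_of_le hn
  rw [add_assoc, iterate_add_apply T k, iterate_add_apply T k]
  exact hk _ _ (hM _ le_self_add)

end EventuallyContracting

theorem totallyBounded_of_forall_exists_edist_lt {α : Type*} [PseudoEMetricSpace α] {s : Set α}
    (h : ∀ ε > 0, ∃ t, TotallyBounded t ∧ ∀ x ∈ s, ∃ y ∈ t, edist x y < ε) :
    TotallyBounded s := by
  refine EMetric.totallyBounded_iff.2 fun ε hε => ?_
  obtain ⟨t, ht, hst⟩ := h (ε / 2) (ENNReal.half_pos hε.ne')
  obtain ⟨c, hc, htc⟩ := EMetric.totallyBounded_iff.1 ht (ε / 2) (ENNReal.half_pos hε.ne')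
  refine ⟨c, hc, fun x hx => ?_⟩
  obtain ⟨y, hy, hxy⟩ := hst x hx
  obtain ⟨z, hz, hyz⟩ := mem_iUnion₂.1 (htc hy)
  refine mem_iUnion₂.2 ⟨z, hz, ?_⟩
  calc edist x z ≤ edist x y + edist y z := edist_triangle _ _ _
    _ < ε / 2 + ε / 2 := ENNReal.add_lt_add hxy hyz
    _ = ε := ENNReal.add_halves ε

theorem totallyBounded_iUnion_of_cauchySeq {X : Type*} [EMetricSpace X]
    {s : ℕ → NonemptyCompacts X} (hs : CauchySeq s) : TotallyBounded (⋃ n, (s n : Set X)) := by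
  refine totallyBounded_of_forall_exists_edist_lt fun ε hε => ?_
  obtain ⟨N, hN⟩ := EMetric.cauchySeq_iff'.1 hs ε hε
  refine ⟨⋃ m ∈ Iic N, (s m : Set X),
    (totallyBounded_biUnion (finite_Iic N)).2 fun m _ => (s m).isCompact.totallyBounded,
    fun x hx => ?_⟩
  obtain ⟨n, hxn⟩ := mem_iUnion.1 hx
  rcases le_total n N with hn | hn
  · exact ⟨x, mem_biUnion hn hxn, by simpa using hε⟩
  · obtain ⟨y, hy, hxy⟩ := exists_edist_lt_of_hausdorffEDist_lt hxn (hN n hn)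
    exact ⟨y, mem_biUnion (self_mem_Iic) hy, hxy⟩

theorem biUnion_image_closure_subset {X : Type*} [TopologicalSpace X] {F : Set (X → X)}
    (hcont : ∀ f ∈ F, Continuous f) {U : Set X} (hU : ⋃ f ∈ F, f '' U ⊆ U) :
    ⋃ f ∈ F, f '' closure U ⊆ closure U :=
  iUnion₂_subset fun f hf => (image_closure_subset_closure_image (hcont f hf)).trans
    (closure_mono ((subset_biUnion_of_mem (u := fun f => f '' U) hf).trans hU))

theorem IsCompact.exists_edist_le_hausdorffEDist {α : Type*} [PseudoEMetricSpace α]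
    {A B : Set α} (hB : IsCompact B) (hB' : B.Nonempty) {a : α} (ha : a ∈ A) :
    ∃ b ∈ B, edist a b ≤ hausdorffEDist A B := by
  obtain ⟨b, hb, hab⟩ := hB.exists_infEDist_eq_edist hB' a
  exact ⟨b, hb, hab ▸ infEDist_le_hausdorffEDist_of_mem ha⟩

theorem edist_le_oscFam {X : Type*} [MetricSpace X] {G : Set (X → X)} {g : X → X} (hg : g ∈ G)
    {t : ℝ≥0∞} {x y : X} (hxy : edist x y ≤ t) : edist (g x) (g y) ≤ oscFam G t :=
  le_iSup₂_of_le g hg <| le_iSup₂_of_le x y <| le_iSup_of_le hxy le_rfl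

theorem hausdorffEDist_biUnion_image_le_oscFam {X : Type*} [MetricSpace X] (G : Set (X → X))
    {A B : NonemptyCompacts X} {t : ℝ≥0∞} (hAB : edist A B ≤ t) :
    hausdorffEDist (⋃ g ∈ G, g '' (A : Set X)) (⋃ g ∈ G, g '' (B : Set X)) ≤ oscFam G t := by
  have key : ∀ A B : NonemptyCompacts X, edist A B ≤ t →
      ∀ x ∈ ⋃ g ∈ G, g '' (A : Set X), ∃ y ∈ ⋃ g ∈ G, g '' (B : Set X),
        edist x y ≤ oscFam G t := by
    intro A B hAB x hx
    obtain ⟨g, hg, a, ha, rfl⟩ : ∃ g ∈ G, ∃ a ∈ (A : Set X), g a = x := by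
      simpa only [mem_iUnion₂, mem_image, exists_prop] using hx
    obtain ⟨b, hb, hab⟩ := B.isCompact.exists_edist_le_hausdorffEDist B.nonempty ha
    exact ⟨g b, mem_biUnion hg (mem_image_of_mem g hb), edist_le_oscFam hg (hab.trans hAB)⟩
  exact hausdorffEDist_le_of_mem_edist (key A B hAB) (key B A (edist_comm A B ▸ hAB))

section Hutchinson

variable {X : Type*} [TopologicalSpace X] (F : Set (X → X)) (hfin : F.Finite)
  (hcont : ∀ f ∈ F, Continuous f) (hF : F.Nonempty)

noncomputable def hutchinson (K : NonemptyCompacts X) : NonemptyCompacts X :=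
  ⟨⟨⋃ f ∈ F, f '' K, hfin.isCompact_biUnion fun f hf => K.isCompact.image (hcont f hf)⟩,
    nonempty_biUnion.2 ⟨_, hF.some_mem, K.nonempty.image _⟩⟩

theorem coe_hutchinson_iterate (n : ℕ) (K : NonemptyCompacts X) :
    ((hutchinson F hfin hcont hF)^[n] K : Set X) = ⋃ g ∈ comps F n, g '' K := by
  induction n generalizing K with
  | zero => simp [comps]
  | succ n ih =>
    rw [iterate_succ_apply, ih]
    ext x
    simp [hutchinson, comps]

end Hutchinson

theorem eventuallyContracting_hutchinson {X : Type*} [MetricSpace X] {F : Set (X → X)}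
    (hfin : F.Finite) (hcont : ∀ f ∈ F, Continuous f) (hF : F.Nonempty)
    (hev : ∀ t : ℝ≥0∞, 0 < t → t ≠ ⊤ →
      Tendsto (fun n => oscFam (comps F n) t) atTop (𝓝 0)) :
    EventuallyContracting (hutchinson F hfin hcont hF) := by
  intro t ht ε hε
  filter_upwards [(hev (max t 1) (by simp) (by simp [ht])).eventually_lt_const hε]
    with n hn A B hAB
  calc edist ((hutchinson F hfin hcont hF)^[n] A) ((hutchinson F hfin hcont hF)^[n] B)
      = hausdorffEDist (⋃ g ∈ comps F n, g '' (A : Set X))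
          (⋃ g ∈ comps F n, g '' (B : Set X)) := by
        rw [← coe_hutchinson_iterate, ← coe_hutchinson_iterate]
        rfl
    _ ≤ oscFam (comps F n) (max t 1) :=
        hausdorffEDist_biUnion_image_le_oscFam _ (hAB.trans (le_max_left t 1))
    _ < ε := hn

/-- If a finite family `F` of continuous self-maps of a complete metric space is eventually
contracting, then there is a nonempty compact set `K` with `F(K) ⊆ K`. -/
theorem exists_compact_invariant {X : Type*} [MetricSpace X] [CompleteSpace X] [Nonempty X]
    (F : Set (X → X)) (hfin : F.Finite) (hcont : ∀ f ∈ F, Continuous f)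
    (hev : ∀ t : ℝ≥0∞, 0 < t → t ≠ ⊤ →
      Tendsto (fun n => oscFam (comps F n) t) atTop (𝓝 0)) :
    ∃ K : Set X, K.Nonempty ∧ IsCompact K ∧ (⋃ f ∈ F, f '' K) ⊆ K := by
  obtain ⟨x₀⟩ := ‹Nonempty X›
  rcases F.eq_empty_or_nonempty with rfl | hF
  · exact ⟨{x₀}, singleton_nonempty x₀, isCompact_singleton, by simp⟩
  set Φ := hutchinson F hfin hcont hF
  set U := ⋃ n, (Φ^[n] {x₀} : Set X)
  have hU_compact : IsCompact (closure U) :=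
    (totallyBounded_iUnion_of_cauchySeq ((eventuallyContracting_hutchinson hfin hcont hF
      hev).cauchySeq_iterate {x₀})).closure.isCompact_of_isClosed isClosed_closure
  have hU_invariant : ⋃ f ∈ F, f '' U ⊆ U := by
    simp only [U, image_iUnion, iUnion_subset_iff]
    intro f hf n
    refine subset_iUnion_of_subset (n + 1) ?_
    rw [iterate_succ_apply']
    exact subset_biUnion_of_mem (u := fun f => f '' (Φ^[n] {x₀} : Set X)) hf
  exact ⟨closure U, ((Φ^[0] {x₀}).nonempty.mono (subset_iUnion _ 0)).closure, hU_compact,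
    biUnion_image_closure_subset hcont hU_invariant⟩
end

section
/- Let (X,d) be a metric space and F a finite family of self-maps of X such that for every compact K ⊆ X, sup_{f ∈ F^{≥n}} diam_d(f(K)) → 0 as n → ∞ (compact contractivity). Fix a strictly increasing sequence (α_n) with α_0 = 1 and sup_n α_n ≤ 2, and define d̂(x,y) = sup_{n∈ω} max_{f∈F^n} α_n · d(f(x), f(y)). Then d ≤ d̂ ≤ 2·diam_d(X), and F is Edelstein contracting with respect to d̂: for every f ∈ F and x,y ∈ X with d̂(f(x),f(y)) > 0, we have d̂(f(x),f(y)) < d̂(x,y). -/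
/-!
If `0 < d̂(f x, f y)`, compact contractivity on the compact set `{f x, f y}` makes every term of
index `n ≥ N` in the supremum defining `d̂(f x, f y)` smaller than `d̂(f x, f y)` itself, so the
supremum is attained at some `n < N` and, `F^n` being finite, at some `g ∈ F^n`. Then
`d̂(f x, f y) = α n · d(g (f x), g (f y)) < α (n + 1) · d((g ∘ f) x, (g ∘ f) y) ≤ d̂(x, y)`,
since `g ∘ f ∈ F^(n+1)` and `α` is strictly increasing.
-/

open Filter Topology ENNReal

theorem exists_lt_eq_iSup_of_tail_le {α : Type*} [CompleteLinearOrder α] {t : ℕ → α}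
    {N : ℕ} {c : α} (htail : ∀ n, N ≤ n → t n ≤ c) (hc : c < ⨆ n, t n) :
    ∃ n < N, t n = ⨆ n, t n := by
  have hsplit : ⨆ n, t n ≤ (⨆ i : Fin N, t i) ⊔ c := by
    refine iSup_le fun n => ?_
    rcases lt_or_ge n N with h | h
    · exact le_sup_of_le_left (le_iSup_of_le ⟨n, h⟩ le_rfl)
    · exact le_sup_of_le_right (htail n h)
  have hhead : ⨆ n, t n ≤ ⨆ i : Fin N, t i :=
    (le_sup_iff.mp hsplit).resolve_right hc.not_ge
  have : Nonempty (Fin N) := by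
    rcases Nat.eq_zero_or_pos N with rfl | hN
    · exact absurd (hc.trans_le (hhead.trans_eq (iSup_of_empty _))) not_lt_bot
    · exact ⟨⟨0, hN⟩⟩
  obtain ⟨i, hi⟩ := exists_eq_ciSup_of_finite (f := fun i : Fin N => t i)
  exact ⟨i, i.isLt, le_antisymm (le_iSup t i) (hi ▸ hhead)⟩

theorem Set.Finite.exists_mem_eq_biSup {ι α : Type*} [CompleteLinearOrder α] {s : Set ι}
    (hs : s.Finite) {φ : ι → α} (hpos : ⊥ < ⨆ i ∈ s, φ i) : ∃ i ∈ s, φ i = ⨆ i ∈ s, φ i := by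
  have : Finite s := hs.to_subtype
  have : Nonempty s := by
    by_contra h
    rw [not_nonempty_iff, Set.isEmpty_coe_sort] at h
    simp [h] at hpos
  obtain ⟨⟨i, hi⟩, heq⟩ := exists_eq_ciSup_of_finite (f := fun i : s => φ i)
  exact ⟨i, hi, heq.trans (iSup_subtype'' s φ)⟩

section Comps

variable {X : Type*} {F : Set (X → X)}

theorem comps_finite (hF : F.Finite) : ∀ n, (comps F n).Finite
  | 0 => Set.finite_singleton id
  | n + 1 => (comps_finite hF n).image2 _ hF

theorem id_mem_comps_zero : (id : X → X) ∈ comps F 0 := rfl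

theorem comp_mem_comps_succ {n : ℕ} {g f : X → X} (hg : g ∈ comps F n) (hf : f ∈ F) :
    g ∘ f ∈ comps F (n + 1) :=
  Set.mem_image2_of_mem hg hf

end Comps

/-- The pseudometric `d̂` of the theorem. -/
noncomputable def weightedOrbitDist {X : Type*} [PseudoMetricSpace X] (F : Set (X → X))
    (α : ℕ → ℝ≥0∞) (x y : X) : ℝ≥0∞ :=
  ⨆ n, ⨆ f ∈ comps F n, α n * edist (f x) (f y)

section WeightedOrbitDist

variable {X : Type*} [PseudoMetricSpace X] {F : Set (X → X)} {α : ℕ → ℝ≥0∞}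

theorem mul_edist_le_weightedOrbitDist {n : ℕ} {f : X → X} (hf : f ∈ comps F n) (x y : X) :
    α n * edist (f x) (f y) ≤ weightedOrbitDist F α x y :=
  le_iSup_of_le n (le_iSup₂_of_le f hf le_rfl)

theorem edist_le_weightedOrbitDist (hα0 : α 0 = 1) (x y : X) :
    edist x y ≤ weightedOrbitDist F α x y := by
  simpa [hα0] using mul_edist_le_weightedOrbitDist (α := α) (id_mem_comps_zero (F := F)) x y

theorem weightedOrbitDist_le_mul_ediam {C : ℝ≥0∞} (hα : ∀ n, α n ≤ C) (x y : X) :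
    weightedOrbitDist F α x y ≤ C * Metric.ediam (Set.univ : Set X) :=
  iSup_le fun n => iSup₂_le fun _ _ =>
    mul_le_mul' (hα n) (Metric.edist_le_ediam_of_mem (Set.mem_univ _) (Set.mem_univ _))

theorem iSup_comps_mul_edist_le_mul_tail {C : ℝ≥0∞} (hα : ∀ n, α n ≤ C) (x y : X) {N n : ℕ}
    (hn : N ≤ n) :
    ⨆ g ∈ comps F n, α n * edist (g x) (g y) ≤
      C * ⨆ m, ⨆ (_ : N ≤ m), ⨆ g ∈ comps F m, Metric.ediam (g '' {x, y}) :=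
  iSup₂_le fun g hg => mul_le_mul' (hα n) <|
    (Metric.edist_le_ediam_of_mem (Set.mem_image_of_mem g (by simp))
      (Set.mem_image_of_mem g (by simp))).trans
      (le_iSup_of_le n (le_iSup_of_le hn (le_iSup₂_of_le g hg le_rfl)))

theorem exists_mem_comps_mul_edist_eq_weightedOrbitDist (hF : F.Finite) {C : ℝ≥0∞}
    (hα : ∀ n, α n ≤ C) (hC : C ≠ ⊤) {x y : X}
    (hcc : Tendsto (fun N => ⨆ m, ⨆ (_ : N ≤ m), ⨆ g ∈ comps F m, Metric.ediam (g '' {x, y}))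
      atTop (𝓝 0))
    (hpos : 0 < weightedOrbitDist F α x y) :
    ∃ n, ∃ g ∈ comps F n, α n * edist (g x) (g y) = weightedOrbitDist F α x y := by
  have hsmall := ENNReal.Tendsto.const_mul hcc (Or.inr hC)
  rw [mul_zero] at hsmall
  obtain ⟨N, hN⟩ := (hsmall.eventually (gt_mem_nhds hpos)).exists
  obtain ⟨n, -, hn⟩ := exists_lt_eq_iSup_of_tail_le
    (fun n hn => iSup_comps_mul_edist_le_mul_tail (F := F) hα x y hn) hN
  obtain ⟨g, hg, hgn⟩ := (comps_finite hF n).exists_mem_eq_biSup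
    (φ := fun g => α n * edist (g x) (g y)) (hn ▸ hpos)
  exact ⟨n, g, hg, hgn.trans hn⟩

end WeightedOrbitDist

theorem dhat_edelstein_general {X : Type*} [MetricSpace X]
    (F : Set (X → X)) (hfin : F.Finite)
    (hcc : ∀ K : Set X, IsCompact K →
      Tendsto (fun n => ⨆ m, ⨆ (_ : n ≤ m), ⨆ f ∈ comps F m, EMetric.diam (f '' K))
        atTop (𝓝 0))
    (α : ℕ → ℝ≥0∞) (hα0 : α 0 = 1) (hαmono : StrictMono α) (hα2 : ∀ n, α n ≤ 2) :
    let dhat : X → X → ℝ≥0∞ := fun x y => ⨆ n, ⨆ f ∈ comps F n, α n * edist (f x) (f y)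
    (∀ x y : X, edist x y ≤ dhat x y) ∧
    (∀ x y : X, dhat x y ≤ 2 * EMetric.diam (Set.univ : Set X)) ∧
    (∀ f ∈ F, ∀ x y : X, 0 < dhat (f x) (f y) → dhat (f x) (f y) < dhat x y) := by
  refine ⟨edist_le_weightedOrbitDist hα0, weightedOrbitDist_le_mul_ediam hα2, ?_⟩
  intro f hf x y hpos
  obtain ⟨n, g, hg, hgn⟩ := exists_mem_comps_mul_edist_eq_weightedOrbitDist hfin hα2
    ofNat_ne_top (hcc _ ((Set.finite_singleton _).insert _).isCompact) hpos
  have hne : edist (g (f x)) (g (f y)) ≠ 0 := fun h =>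
    hpos.ne' (hgn.symm.trans (by rw [h, mul_zero]))
  calc weightedOrbitDist F α (f x) (f y) = α n * edist (g (f x)) (g (f y)) := hgn.symm
    _ < α (n + 1) * edist ((g ∘ f) x) ((g ∘ f) y) :=
      ENNReal.mul_lt_mul_left hne (edist_ne_top _ _) (hαmono n.lt_succ_self)
    _ ≤ weightedOrbitDist F α x y :=
      mul_edist_le_weightedOrbitDist (comp_mem_comps_succ hg hf) x y

/-- For a bounded metric space `(X, d)` and a compactly contracting finite family `F` of
self-maps, the pseudometric `d̂(x,y) = sup_n max_{f ∈ F^n} α_n · d(f x, f y)` satisfies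
`d ≤ d̂ ≤ 2 · diam X` and makes `F` Edelstein contracting. -/
theorem dhat_edelstein {X : Type*} [MetricSpace X]
    (hbd : EMetric.diam (Set.univ : Set X) ≠ ⊤)
    (F : Set (X → X)) (hfin : F.Finite)
    (hcc : ∀ K : Set X, IsCompact K →
      Tendsto (fun n => ⨆ m, ⨆ (_ : n ≤ m), ⨆ f ∈ comps F m, EMetric.diam (f '' K))
        atTop (𝓝 0))
    (α : ℕ → ℝ≥0∞) (hα0 : α 0 = 1) (hαmono : StrictMono α) (hα2 : ∀ n, α n ≤ 2) :
    let dhat : X → X → ℝ≥0∞ := fun x y => ⨆ n, ⨆ f ∈ comps F n, α n * edist (f x) (f y)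
    (∀ x y : X, edist x y ≤ dhat x y) ∧
    (∀ x y : X, dhat x y ≤ 2 * EMetric.diam (Set.univ : Set X)) ∧
    (∀ f ∈ F, ∀ x y : X, 0 < dhat (f x) (f y) → dhat (f x) (f y) < dhat x y) :=
  dhat_edelstein_general F hfin hcc α hα0 hαmono hα2
end

section
/- Let (X,d) be a bounded metric space and F a finite family of self-maps of X which is eventually contracting (dω_{F^n}(t) → 0 for all t > 0) and globally contracting in the sense that sup_{f∈F^{≥n}} diam_d(f(X)) → 0 as n → ∞. Fix a strictly increasing sequence (α_n) with α_0 = 1, sup α_n ≤ 2, and define d̂(x,y) = sup_n max_{f∈F^n} α_n d(f(x),f(y)). Then F is Rakotch contracting with respect to d̂: for every δ > 0 there is λ < 1 such that d̂(f(x),f(y)) ≤ λ·t for every f ∈ F, every t ≥ δ, and all x,y with d̂(x,y) ≤ t. -/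
open Filter Topology ENNReal

/-- If `(X,d)` is a bounded metric space and `F` is an eventually contracting and globally
contracting finite family of self-maps, then `F` is Rakotch contracting with respect to the
pseudometric `d̂(x,y) = sup_n max_{f ∈ F^n} α_n · d(f x, f y)`. -/
theorem dhat_rakotch {X : Type*} [MetricSpace X]
    (hbd : EMetric.diam (Set.univ : Set X) ≠ ⊤)
    (F : Set (X → X)) (hfin : F.Finite)
    (hev : ∀ t : ℝ≥0∞, 0 < t → t ≠ ⊤ →
      Tendsto (fun n => oscFam (comps F n) t) atTop (𝓝 0))
    (hgc : Tendsto
      (fun n => ⨆ m, ⨆ (_ : n ≤ m), ⨆ f ∈ comps F m, EMetric.diam (f '' (Set.univ : Set X)))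
      atTop (𝓝 0))
    (α : ℕ → ℝ≥0∞) (hα0 : α 0 = 1) (hαmono : StrictMono α) (hα2 : ∀ n, α n ≤ 2) :
    let dhat : X → X → ℝ≥0∞ := fun x y => ⨆ n, ⨆ f ∈ comps F n, α n * edist (f x) (f y)
    ∀ δ : ℝ≥0∞, 0 < δ → ∃ lam : ℝ≥0∞, lam < 1 ∧
      ∀ f ∈ F, ∀ t : ℝ≥0∞, δ ≤ t → ∀ x y : X, dhat x y ≤ t →
        dhat (f x) (f y) ≤ lam * t := by

  intro dhat δ hδ
  have hα1 : ∀ n, 1 ≤ α n := fun n => hα0 ▸ hαmono.monotone (Nat.zero_le n)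
  have hαne0 : ∀ n, α n ≠ 0 := fun n h => by simpa [h] using hα1 n
  have hαnetop : ∀ n, α n ≠ ⊤ := fun n =>
    ne_top_of_le_ne_top (by norm_num) (hα2 n)
  set ε : ℝ≥0∞ := 2⁻¹ * (2⁻¹ * min δ 1) with hεdef
  have hεpos : 0 < ε := by
    have h2 : (2 : ℝ≥0∞)⁻¹ ≠ 0 := by norm_num
    exact ENNReal.mul_pos h2 (ENNReal.mul_pos h2 (lt_min hδ one_pos).ne').ne'
  obtain ⟨N, hN⟩ := ENNReal.tendsto_atTop_zero.mp hgc ε hεpos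
  set lam1 : ℝ≥0∞ := (Finset.range N).sup (fun n => α n / α (n + 1)) with hlam1def
  have hlam1 : lam1 < 1 := by
    rw [hlam1def]
    refine (Finset.sup_lt_iff (by norm_num)).mpr fun n _ => ?_
    rw [ENNReal.div_lt_iff (Or.inl (hαne0 _)) (Or.inl (hαnetop _)), one_mul]
    exact hαmono (Nat.lt_succ_self n)
  refine ⟨max lam1 2⁻¹, max_lt hlam1 (by norm_num), ?_⟩
  intro f hf t ht x y hxy
  have hxy' : (⨆ n, ⨆ g ∈ comps F n, α n * edist (g x) (g y)) ≤ t := hxy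
  show (⨆ n, ⨆ g ∈ comps F n, α n * edist (g (f x)) (g (f y))) ≤ max lam1 2⁻¹ * t
  refine iSup_le fun n => iSup_le fun g => iSup_le fun hg => ?_
  have hmem : g ∘ f ∈ comps F (n + 1) := Set.mem_image2_of_mem hg hf
  rcases lt_or_ge n N with hn | hn
  · calc α n * edist (g (f x)) (g (f y))
        = (α n / α (n + 1)) * (α (n + 1) * edist ((g ∘ f) x) ((g ∘ f) y)) := by
          rw [← mul_assoc, ENNReal.div_mul_cancel (hαne0 _) (hαnetop _)]; rfl
      _ ≤ lam1 * t := by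
          have h1 : α n / α (n + 1) ≤ lam1 :=
            hlam1def ▸ Finset.le_sup (f := fun n => α n / α (n + 1)) (Finset.mem_range.2 hn)
          refine mul_le_mul' h1 ?_
          refine le_trans (le_iSup_of_le (n + 1) ?_) hxy'
          exact le_iSup₂_of_le (f := fun (h : X → X) (_ : h ∈ comps F (n + 1)) =>
            α (n + 1) * edist (h x) (h y)) (g ∘ f) hmem le_rfl
      _ ≤ max lam1 2⁻¹ * t := mul_le_mul_left (le_max_left _ _) _
  · calc α n * edist (g (f x)) (g (f y))
        ≤ 2 * edist ((g ∘ f) x) ((g ∘ f) y) := mul_le_mul_left (hα2 n) _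
      _ ≤ 2 * EMetric.diam ((g ∘ f) '' Set.univ) := by
          exact mul_le_mul_right (EMetric.edist_le_diam_of_mem (Set.mem_image_of_mem _ (Set.mem_univ x)) (Set.mem_image_of_mem _ (Set.mem_univ y))) _
      _ ≤ 2 * ε := by
          refine mul_le_mul_right (le_trans ?_ (hN N le_rfl)) _
          refine le_iSup_of_le (n + 1) (le_iSup_of_le (by omega) ?_)
          exact le_iSup₂_of_le (f := fun (h : X → X) (_ : h ∈ comps F (n + 1)) =>
            EMetric.diam (h '' Set.univ)) (g ∘ f) hmem le_rfl
      _ = 2⁻¹ * min δ 1 := by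
          rw [hεdef, ← mul_assoc, ENNReal.mul_inv_cancel two_ne_zero ENNReal.ofNat_ne_top, one_mul]
      _ ≤ 2⁻¹ * t := mul_le_mul_right ((min_le_left _ _).trans ht) _
      _ ≤ max lam1 2⁻¹ * t := mul_le_mul_left (le_max_right _ _) _
end

section
/- Let F be a finite family of continuous self-maps of a Hausdorff topological space X admitting a compact attractor A: F(A) = A and for every compact K ∈ K(X) the sequence (F^n(K)) converges to A in the Vietoris topology. Then F is compact-dominating: every compact set C ⊆ X is contained in a compact set K ⊆ X with F(K) ⊆ K. -/
open Filter Topology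

/-- If a finite family `F` of continuous self-maps of a Hausdorff space admits a compact
attractor `A` (that is, `F(A) = A` and for every nonempty compact `K` the iterates `F^n(K)`
converge to `A` in the Vietoris topology), then `F` is compact-dominating: every compact set
`C` is contained in a compact set `K` with `F(K) ⊆ K`. -/
theorem compact_dominating_of_attractor {X : Type*} [TopologicalSpace X] [T2Space X]
    (F : Set (X → X)) (hfin : F.Finite) (hcont : ∀ f ∈ F, Continuous f)
    (A : Set X) (hA : A.Nonempty) (hAc : IsCompact A)
    (hfix : (⋃ f ∈ F, f '' A) = A)
    (hattr : ∀ K : Set X, K.Nonempty → IsCompact K →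
      (∀ U : Set X, IsOpen U → A ⊆ U →
        ∀ᶠ n in atTop, (fun S => ⋃ f ∈ F, f '' S)^[n] K ⊆ U) ∧
      (∀ U : Set X, IsOpen U → (A ∩ U).Nonempty →
        ∀ᶠ n in atTop, ((fun S => ⋃ f ∈ F, f '' S)^[n] K ∩ U).Nonempty)) :
    ∀ C : Set X, IsCompact C → ∃ K : Set X, IsCompact K ∧ C ⊆ K ∧
      (⋃ f ∈ F, f '' K) ⊆ K := by
  classical
  intro C hC
  set T : Set X → Set X := fun S => ⋃ f ∈ F, f '' S with hTdef
  rcases C.eq_empty_or_nonempty with rfl | hCne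
  · exact ⟨A, hAc, by simp, hfix.subset⟩
  have hTcomp : ∀ S : Set X, IsCompact S → IsCompact (T S) := fun S hS =>
    hfin.isCompact_biUnion (fun f hf => hS.image (hcont f hf))
  have hiter : ∀ n, IsCompact (T^[n] C) := by
    intro n
    induction n with
    | zero => simpa
    | succ n ih => rw [Function.iterate_succ_apply']; exact hTcomp _ ih
  refine ⟨A ∪ ⋃ n, T^[n] C, ?_, ?_, ?_⟩
  · apply isCompact_of_finite_subcover
    intro ι U hUopen hcover
    obtain ⟨tA, htA⟩ := hAc.elim_finite_subcover U hUopen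
      ((Set.subset_union_left).trans hcover)
    set V : Set X := ⋃ i ∈ tA, U i with hVdef
    have hVopen : IsOpen V := isOpen_biUnion fun i _ => hUopen i
    obtain ⟨N, hN⟩ := Filter.eventually_atTop.mp ((hattr C hCne hC).1 V hVopen htA)
    have hsub : ∀ n, ∃ t : Finset ι, T^[n] C ⊆ ⋃ i ∈ t, U i := by
      intro n
      exact (hiter n).elim_finite_subcover U hUopen
        (fun x hx => hcover (Set.mem_union_right _ (Set.mem_iUnion.2 ⟨n, hx⟩)))
    choose tn htn using hsub
    refine ⟨tA ∪ (Finset.range N).biUnion tn, ?_⟩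
    intro x hx
    rcases hx with hx | hx
    · obtain ⟨i, hi, hxi⟩ := Set.mem_iUnion₂.mp (htA hx)
      exact Set.mem_iUnion₂.2 ⟨i, Finset.mem_union_left _ hi, hxi⟩
    · obtain ⟨n, hxn⟩ := Set.mem_iUnion.mp hx
      by_cases hn : n < N
      · obtain ⟨i, hi, hxi⟩ := Set.mem_iUnion₂.mp (htn n hxn)
        exact Set.mem_iUnion₂.2
          ⟨i, Finset.mem_union_right _ (Finset.mem_biUnion.2 ⟨n, Finset.mem_range.2 hn, hi⟩), hxi⟩
      · obtain ⟨i, hi, hxi⟩ := Set.mem_iUnion₂.mp (hN n (le_of_not_gt hn) hxn)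
        exact Set.mem_iUnion₂.2 ⟨i, Finset.mem_union_left _ hi, hxi⟩
  · intro x hx
    exact Set.mem_union_right _ (Set.mem_iUnion.2 ⟨0, hx⟩)
  · refine Set.iUnion₂_subset fun f hf => ?_
    intro y hy
    obtain ⟨x, hx, rfl⟩ := hy
    rcases hx with hx | hx
    · exact Set.mem_union_left _ (hfix ▸ Set.mem_iUnion₂.2 ⟨f, hf, Set.mem_image_of_mem f hx⟩)
    · obtain ⟨n, hxn⟩ := Set.mem_iUnion.mp hx
      refine Set.mem_union_right _ (Set.mem_iUnion.2 ⟨n + 1, ?_⟩)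
      rw [Function.iterate_succ_apply']
      exact Set.mem_iUnion₂.2 ⟨f, hf, Set.mem_image_of_mem f hxn⟩
end

section
/- If D is a directed family of pseudometrics generating the topology of a Hausdorff space X (a directed admissible multimetric), then the family D_H = { d_H : d ∈ D } of induced Hausdorff pseudometrics generates the Vietoris topology on the hyperspace K(X) of nonempty compact subsets of X. -/
/-!
A Hausdorff ball `{L | d_H(K₀, L) < ε}` is Vietoris open: around each of its members `L`, cover
`L` by finitely many small `d`-balls; every compact set lying in their union and meeting each of
them is `d_H`-close to `L`, and the triangle inequality for `d_H` finishes. Conversely, directedness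
makes the `d`-balls with `d ∈ D` a neighbourhood base, and compactness (again with directedness)
yields a single `d ∈ D` and `ε > 0` such that the `ε`-balls around all points of `L ⊆ U` stay in `U`;
then `d_H(L, M) < ε` forces `M ⊆ U`, and likewise `M` meets `U` whenever `L` does.
-/

open Filter Topology ENNReal

/-- The Hausdorff pseudometric (with values in `ℝ≥0∞`) induced by a real-valued
pseudometric `d` on subsets of `X`. -/
noncomputable def hausd {X : Type*} (d : X → X → ℝ) (A B : Set X) : ℝ≥0∞ :=
  max (⨆ a ∈ A, ⨅ b ∈ B, ENNReal.ofReal (d a b))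
      (⨆ b ∈ B, ⨅ a ∈ A, ENNReal.ofReal (d a b))

structure IsPseudometric {X : Type*} (d : X → X → ℝ) : Prop where
  self_eq_zero : ∀ x, d x x = 0
  symm : ∀ x y, d x y = d y x
  triangle : ∀ x y z, d x z ≤ d x y + d y z

theorem TopologicalSpace.generateFrom_eq_top {α : Type*} {g : Set (Set α)}
    (hg : ∀ s ∈ g, s = ∅ ∨ s = Set.univ) : TopologicalSpace.generateFrom g = ⊤ :=
  top_unique (le_generateFrom fun s hs => (TopologicalSpace.isOpen_top_iff s).2 (hg s hs))

section Hausd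

variable {X : Type*} {d : X → X → ℝ} {A B : Set X}

abbrev IsPseudometric.toPseudoMetricSpace (hd : IsPseudometric d) : PseudoMetricSpace X where
  dist := d
  dist_self := hd.self_eq_zero
  dist_comm := hd.symm
  dist_triangle := hd.triangle

theorem IsPseudometric.hausd_eq_hausdorffEDist (hd : IsPseudometric d) (A B : Set X) :
    letI := hd.toPseudoMetricSpace
    hausd d A B = Metric.hausdorffEDist A B := by
  let := hd.toPseudoMetricSpace
  simp only [hausd, Metric.hausdorffEDist_def, Metric.infEDist, edist_dist, dist, hd.symm]

theorem IsPseudometric.hausd_self (hd : IsPseudometric d) (A : Set X) : hausd d A A = 0 := by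
  let := hd.toPseudoMetricSpace
  rw [hd.hausd_eq_hausdorffEDist, Metric.hausdorffEDist_self]

theorem IsPseudometric.hausd_triangle (hd : IsPseudometric d) (A B C : Set X) :
    hausd d A C ≤ hausd d A B + hausd d B C := by
  let := hd.toPseudoMetricSpace
  simp only [hd.hausd_eq_hausdorffEDist]
  exact Metric.hausdorffEDist_triangle

theorem hausd_le_ofReal {r : ℝ} (hAB : ∀ a ∈ A, ∃ b ∈ B, d a b ≤ r)
    (hBA : ∀ b ∈ B, ∃ a ∈ A, d a b ≤ r) : hausd d A B ≤ ENNReal.ofReal r := by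
  refine max_le (iSup₂_le fun a ha => ?_) (iSup₂_le fun b hb => ?_)
  · obtain ⟨b, hb, hab⟩ := hAB a ha
    exact iInf₂_le_of_le b hb (ENNReal.ofReal_le_ofReal hab)
  · obtain ⟨a, ha, hab⟩ := hBA b hb
    exact iInf₂_le_of_le a ha (ENNReal.ofReal_le_ofReal hab)

theorem exists_lt_of_hausd_lt_left {ε : ℝ} (h : hausd d A B < ENNReal.ofReal ε) {a : X}
    (ha : a ∈ A) : ∃ b ∈ B, d a b < ε := by
  have : ⨅ b ∈ B, ENNReal.ofReal (d a b) < ENNReal.ofReal ε :=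
    (le_iSup₂_of_le a ha le_rfl).trans_lt ((le_max_left _ _).trans_lt h)
  obtain ⟨b, hb, hab⟩ := by simpa only [iInf_lt_iff, exists_prop] using this
  exact ⟨b, hb, (ENNReal.ofReal_lt_ofReal_iff'.1 hab).1⟩

theorem exists_lt_of_hausd_lt_right {ε : ℝ} (h : hausd d A B < ENNReal.ofReal ε) {b : X}
    (hb : b ∈ B) : ∃ a ∈ A, d a b < ε := by
  have : ⨅ a ∈ A, ENNReal.ofReal (d a b) < ENNReal.ofReal ε :=
    (le_iSup₂_of_le b hb le_rfl).trans_lt ((le_max_right _ _).trans_lt h)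
  obtain ⟨a, ha, hab⟩ := by simpa only [iInf_lt_iff, exists_prop] using this
  exact ⟨a, ha, (ENNReal.ofReal_lt_ofReal_iff'.1 hab).1⟩

end Hausd

section Directed

open Set TopologicalSpace

variable {X : Type*} [TopologicalSpace X] {D : Set (X → X → ℝ)}

theorem exists_ball_subset_of_isOpen (hD : D.Nonempty) (hpm : ∀ d ∈ D, IsPseudometric d)
    (hdir : ∀ d₁ ∈ D, ∀ d₂ ∈ D, ∃ d₃ ∈ D, ∀ x y, max (d₁ x y) (d₂ x y) ≤ d₃ x y)
    (hadm : generateFrom {U : Set X | ∃ d ∈ D, ∃ x : X, ∃ ε : ℝ, 0 < ε ∧ U = {y | d x y < ε}} =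
      ‹TopologicalSpace X›)
    {U : Set X} (hU : IsOpen U) : ∀ x ∈ U, ∃ d ∈ D, ∃ ε > 0, {y | d x y < ε} ⊆ U := by
  rw [← hadm] at hU
  induction hU with
  | basic V hV =>
    obtain ⟨d, hd, x₀, ε, -, rfl⟩ := hV
    refine fun x (hx : d x₀ x < ε) => ⟨d, hd, ε - d x₀ x, sub_pos.2 hx, fun y hy => ?_⟩
    have : d x y < ε - d x₀ x := hy
    show d x₀ y < ε
    linarith [(hpm d hd).triangle x₀ x y]
  | univ =>
    obtain ⟨d, hd⟩ := hD
    exact fun _ _ => ⟨d, hd, 1, one_pos, subset_univ _⟩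
  | inter V W _ _ ihV ihW =>
    intro x hx
    obtain ⟨d₁, hd₁, ε₁, hε₁, h₁⟩ := ihV x hx.1
    obtain ⟨d₂, hd₂, ε₂, hε₂, h₂⟩ := ihW x hx.2
    obtain ⟨d, hd, hle⟩ := hdir d₁ hd₁ d₂ hd₂
    refine ⟨d, hd, min ε₁ ε₂, lt_min hε₁ hε₂, fun y (hy : d x y < min ε₁ ε₂) => ⟨h₁ ?_, h₂ ?_⟩⟩
    · exact ((le_max_left _ _).trans (hle x y)).trans_lt (hy.trans_le (min_le_left _ _))
    · exact ((le_max_right _ _).trans (hle x y)).trans_lt (hy.trans_le (min_le_right _ _))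
  | sUnion S _ ih =>
    rintro x ⟨V, hVS, hxV⟩
    obtain ⟨d, hd, ε, hε, h⟩ := ih V hVS x hxV
    exact ⟨d, hd, ε, hε, h.trans (subset_sUnion_of_mem hVS)⟩

theorem exists_ball_subset_of_isCompact (hD : D.Nonempty) (hpm : ∀ d ∈ D, IsPseudometric d)
    (hdir : ∀ d₁ ∈ D, ∀ d₂ ∈ D, ∃ d₃ ∈ D, ∀ x y, max (d₁ x y) (d₂ x y) ≤ d₃ x y)
    (hball : ∀ d ∈ D, ∀ x, ∀ ε > 0, IsOpen {y | d x y < ε}) {U : Set X}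
    (hU : ∀ x ∈ U, ∃ d ∈ D, ∃ ε > 0, {y | d x y < ε} ⊆ U) {K : Set X} (hK : IsCompact K)
    (hKU : K ⊆ U) : ∃ d ∈ D, ∃ ε > 0, ∀ x ∈ K, {y | d x y < ε} ⊆ U := by
  refine hK.induction_on (p := fun s => ∃ d ∈ D, ∃ ε > 0, ∀ x ∈ s, {y | d x y < ε} ⊆ U)
    ?_ ?_ ?_ fun x hx => ?_
  · obtain ⟨d, hd⟩ := hD
    exact ⟨d, hd, 1, one_pos, fun x hx => hx.elim⟩
  · rintro s t hst ⟨d, hd, ε, hε, h⟩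
    exact ⟨d, hd, ε, hε, fun x hx => h x (hst hx)⟩
  · rintro s t ⟨d₁, hd₁, ε₁, hε₁, h₁⟩ ⟨d₂, hd₂, ε₂, hε₂, h₂⟩
    obtain ⟨d, hd, hle⟩ := hdir d₁ hd₁ d₂ hd₂
    refine ⟨d, hd, min ε₁ ε₂, lt_min hε₁ hε₂, ?_⟩
    rintro x (hx | hx) y (hy : d x y < min ε₁ ε₂)
    · exact h₁ x hx (((le_max_left _ _).trans (hle x y)).trans_lt (hy.trans_le (min_le_left _ _)))
    · exact h₂ x hx (((le_max_right _ _).trans (hle x y)).trans_lt (hy.trans_le (min_le_right _ _)))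
  · obtain ⟨d, hd, ε, hε, hsub⟩ := hU x (hKU hx)
    have hx' : x ∈ {y | d x y < ε / 2} := by simp [(hpm d hd).self_eq_zero, hε]
    refine ⟨_, mem_nhdsWithin_of_mem_nhds ((hball d hd x _ (half_pos hε)).mem_nhds hx'),
      d, hd, ε / 2, half_pos hε, fun y (hy : d x y < ε / 2) z (hz : d y z < ε / 2) => hsub ?_⟩
    show d x z < ε
    linarith [(hpm d hd).triangle x y z]

end Directed

abbrev Hyperspace (X : Type*) [TopologicalSpace X] := {K : Set X // K.Nonempty ∧ IsCompact K}

namespace Hyperspace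

open Set TopologicalSpace

variable {X : Type*} [TopologicalSpace X]

variable (X) in
abbrev vietoris : TopologicalSpace (Hyperspace X) :=
  generateFrom ({S | ∃ U : Set X, IsOpen U ∧ S = {K | K.1 ⊆ U}} ∪
    {S | ∃ U : Set X, IsOpen U ∧ S = {K | (K.1 ∩ U).Nonempty}})

abbrev hausdTopology (D : Set (X → X → ℝ)) : TopologicalSpace (Hyperspace X) :=
  generateFrom {S | ∃ d ∈ D, ∃ K₀ : Hyperspace X, ∃ ε : ℝ≥0∞,
    0 < ε ∧ ε ≠ ⊤ ∧ S = {L | hausd d K₀.1 L.1 < ε}}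

theorem isOpen_vietoris_setOf_subset {U : Set X} (hU : IsOpen U) :
    IsOpen[vietoris X] {K : Hyperspace X | K.1 ⊆ U} :=
  isOpen_generateFrom_of_mem (Or.inl ⟨U, hU, rfl⟩)

theorem isOpen_vietoris_setOf_inter_nonempty {U : Set X} (hU : IsOpen U) :
    IsOpen[vietoris X] {K : Hyperspace X | (K.1 ∩ U).Nonempty} :=
  isOpen_generateFrom_of_mem (Or.inr ⟨U, hU, rfl⟩)

theorem vietoris_eq_top_of_eq_top (h : ‹TopologicalSpace X› = ⊤) : vietoris X = ⊤ := by
  refine generateFrom_eq_top ?_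
  rintro _ (⟨U, hU, rfl⟩ | ⟨U, hU, rfl⟩) <;>
    rcases (isOpen_top_iff U).1 (h ▸ hU) with rfl | rfl
  · exact Or.inl (eq_empty_of_forall_notMem fun K hK => K.2.1.ne_empty (subset_empty_iff.1 hK))
  · exact Or.inr (eq_univ_of_forall fun K => subset_univ K.1)
  · exact Or.inl (eq_empty_of_forall_notMem fun K hK => by simp at hK)
  · exact Or.inr (eq_univ_of_forall fun K => by simpa using K.2.1)

section Pseudometric

variable {d : X → X → ℝ}

theorem exists_vietoris_open_subset_hausd_lt (hd : IsPseudometric d)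
    (hball : ∀ x, ∀ ε > 0, IsOpen {y | d x y < ε}) (L : Hyperspace X) {r : ℝ≥0∞} (hr : 0 < r) :
    ∃ S, IsOpen[vietoris X] S ∧ L ∈ S ∧ ∀ M ∈ S, hausd d L.1 M.1 < r := by
  obtain ⟨δ, -, hδ, hδr⟩ := ENNReal.lt_iff_exists_real_btwn.1 hr
  have hδ : 0 < δ := ENNReal.ofReal_pos.1 hδ
  set B : X → Set X := fun x => {y | d x y < δ / 2}
  have hB : ∀ x, IsOpen (B x) := fun x => hball x _ (half_pos hδ)
  have hxB : ∀ x, x ∈ B x := fun x => by simp [B, hd.self_eq_zero, hδ]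
  obtain ⟨F, hFL, hLF⟩ := L.2.2.elim_nhds_subcover B fun x _ => (hB x).mem_nhds (hxB x)
  refine ⟨{M | M.1 ⊆ ⋃ x ∈ F, B x} ∩ ⋂ x ∈ F, {M | (M.1 ∩ B x).Nonempty}, ?_,
    ⟨hLF, mem_iInter₂.2 fun x hx => ⟨x, hFL x hx, hxB x⟩⟩, ?_⟩
  · let := vietoris X
    exact (isOpen_vietoris_setOf_subset (isOpen_biUnion fun x _ => hB x)).inter
      (isOpen_biInter_finset fun x _ => isOpen_vietoris_setOf_inter_nonempty (hB x))
  · rintro M ⟨hMF, hMB⟩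
    refine (hausd_le_ofReal (r := δ) (fun a ha => ?_) (fun b hb => ?_)).trans_lt hδr
    · obtain ⟨x, hx, hxa : d x a < δ / 2⟩ := mem_iUnion₂.1 (hLF ha)
      obtain ⟨m, hm, hxm : d x m < δ / 2⟩ := mem_iInter₂.1 hMB x hx
      exact ⟨m, hm, by linarith [hd.triangle a x m, hd.symm a x]⟩
    · obtain ⟨x, hx, hxb : d x b < δ / 2⟩ := mem_iUnion₂.1 (hMF hb)
      exact ⟨x, hFL x hx, by linarith⟩

theorem isOpen_vietoris_setOf_hausd_lt (hd : IsPseudometric d)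
    (hball : ∀ x, ∀ ε > 0, IsOpen {y | d x y < ε}) (K₀ : Hyperspace X) (ε : ℝ≥0∞) :
    IsOpen[vietoris X] {L : Hyperspace X | hausd d K₀.1 L.1 < ε} := by
  let := vietoris X
  refine isOpen_iff_forall_mem_open.2 fun L hL => ?_
  obtain ⟨S, hS, hLS, hSL⟩ :=
    exists_vietoris_open_subset_hausd_lt hd hball L (tsub_pos_of_lt hL)
  refine ⟨S, fun M hM => ?_, hS, hLS⟩
  calc hausd d K₀.1 M.1 ≤ hausd d K₀.1 L.1 + hausd d L.1 M.1 := hd.hausd_triangle _ _ _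
    _ < ε := lt_tsub_iff_left.1 (hSL M hM)

end Pseudometric

section Directed

variable {D : Set (X → X → ℝ)}

theorem isOpen_hausdTopology_of_forall (hpm : ∀ d ∈ D, IsPseudometric d) {S : Set (Hyperspace X)}
    (h : ∀ L ∈ S, ∃ d ∈ D, ∃ ε > 0,
      ∀ M : Hyperspace X, hausd d L.1 M.1 < ENNReal.ofReal ε → M ∈ S) :
    IsOpen[hausdTopology D] S := by
  let := hausdTopology D
  refine isOpen_iff_forall_mem_open.2 fun L hL => ?_
  obtain ⟨d, hd, ε, hε, hS⟩ := h L hL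
  refine ⟨_, hS, isOpen_generateFrom_of_mem
    ⟨d, hd, L, _, ENNReal.ofReal_pos.2 hε, ENNReal.ofReal_ne_top, rfl⟩, ?_⟩
  show hausd d L.1 L.1 < _
  rw [(hpm d hd).hausd_self]
  exact ENNReal.ofReal_pos.2 hε

theorem isOpen_hausdTopology_setOf_subset (hD : D.Nonempty) (hpm : ∀ d ∈ D, IsPseudometric d)
    (hdir : ∀ d₁ ∈ D, ∀ d₂ ∈ D, ∃ d₃ ∈ D, ∀ x y, max (d₁ x y) (d₂ x y) ≤ d₃ x y)
    (hball : ∀ d ∈ D, ∀ x, ∀ ε > 0, IsOpen {y | d x y < ε}) {U : Set X}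
    (hU : ∀ x ∈ U, ∃ d ∈ D, ∃ ε > 0, {y | d x y < ε} ⊆ U) :
    IsOpen[hausdTopology D] {K : Hyperspace X | K.1 ⊆ U} := by
  refine isOpen_hausdTopology_of_forall hpm fun L (hL : L.1 ⊆ U) => ?_
  obtain ⟨d, hd, ε, hε, hsub⟩ := exists_ball_subset_of_isCompact hD hpm hdir hball hU L.2.2 hL
  refine ⟨d, hd, ε, hε, fun M hM b hb => ?_⟩
  obtain ⟨a, ha, hab⟩ := exists_lt_of_hausd_lt_right hM hb
  exact hsub a ha hab

theorem isOpen_hausdTopology_setOf_inter_nonempty (hpm : ∀ d ∈ D, IsPseudometric d) {U : Set X}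
    (hU : ∀ x ∈ U, ∃ d ∈ D, ∃ ε > 0, {y | d x y < ε} ⊆ U) :
    IsOpen[hausdTopology D] {K : Hyperspace X | (K.1 ∩ U).Nonempty} := by
  refine isOpen_hausdTopology_of_forall hpm fun L ⟨x, hxL, hxU⟩ => ?_
  obtain ⟨d, hd, ε, hε, hsub⟩ := hU x hxU
  refine ⟨d, hd, ε, hε, fun M hM => ?_⟩
  obtain ⟨b, hb, hxb⟩ := exists_lt_of_hausd_lt_left hM hxL
  exact ⟨b, hb, hsub hxb⟩

end Directed

end Hyperspace

theorem directed_multimetric_hausdorff_generates_vietoris_general {X : Type*}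
    [t : TopologicalSpace X] (D : Set (X → X → ℝ))
    (hps : ∀ d ∈ D, (∀ x, d x x = 0) ∧ (∀ x y, d x y = d y x) ∧
      (∀ x y z, d x z ≤ d x y + d y z))
    (hdir : ∀ d₁ ∈ D, ∀ d₂ ∈ D, ∃ d₃ ∈ D, ∀ x y, max (d₁ x y) (d₂ x y) ≤ d₃ x y)
    (hadm : TopologicalSpace.generateFrom
      {U : Set X | ∃ d ∈ D, ∃ x : X, ∃ ε : ℝ, 0 < ε ∧ U = {y | d x y < ε}} = t) :
    TopologicalSpace.generateFrom
        ({S : Set {K : Set X // K.Nonempty ∧ IsCompact K} |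
            ∃ U : Set X, IsOpen U ∧ S = {K | K.1 ⊆ U}} ∪
          {S : Set {K : Set X // K.Nonempty ∧ IsCompact K} |
            ∃ U : Set X, IsOpen U ∧ S = {K | (K.1 ∩ U).Nonempty}}) =
      TopologicalSpace.generateFrom
        {S : Set {K : Set X // K.Nonempty ∧ IsCompact K} |
          ∃ d ∈ D, ∃ K₀ : {K : Set X // K.Nonempty ∧ IsCompact K}, ∃ ε : ℝ≥0∞,
            0 < ε ∧ ε ≠ ⊤ ∧ S = {L | hausd d K₀.1 L.1 < ε}} := by
  rcases D.eq_empty_or_nonempty with rfl | hD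
  -- with no pseudometrics, `X` and both hyperspace topologies are indiscrete
  · have ht : t = ⊤ := hadm ▸ TopologicalSpace.generateFrom_eq_top (by simp)
    exact (Hyperspace.vietoris_eq_top_of_eq_top ht).trans
      (TopologicalSpace.generateFrom_eq_top (by simp)).symm
  have hpm : ∀ d ∈ D, IsPseudometric d := fun d hd =>
    let ⟨h₀, hsymm, htri⟩ := hps d hd; ⟨h₀, hsymm, htri⟩
  have hball : ∀ d ∈ D, ∀ x, ∀ ε > 0, IsOpen {y | d x y < ε} := fun d hd x ε hε =>
    hadm ▸ TopologicalSpace.isOpen_generateFrom_of_mem ⟨d, hd, x, ε, hε, rfl⟩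
  have hbase {U : Set X} (hU : IsOpen U) := exists_ball_subset_of_isOpen hD hpm hdir hadm hU
  refine le_antisymm (le_generateFrom ?_) (le_generateFrom ?_)
  · rintro _ ⟨d, hd, K₀, ε, -, -, rfl⟩
    exact Hyperspace.isOpen_vietoris_setOf_hausd_lt (hpm d hd) (hball d hd) K₀ ε
  · rintro _ (⟨U, hU, rfl⟩ | ⟨U, hU, rfl⟩)
    · exact Hyperspace.isOpen_hausdTopology_setOf_subset hD hpm hdir hball (hbase hU)
    · exact Hyperspace.isOpen_hausdTopology_setOf_inter_nonempty hpm (hbase hU)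

/-- If `D` is a directed admissible multimetric on a Hausdorff space `X`, then the family
`D_H` of induced Hausdorff pseudometrics generates the Vietoris topology on the hyperspace
of nonempty compact subsets of `X`. -/
theorem directed_multimetric_hausdorff_generates_vietoris {X : Type*}
    [t : TopologicalSpace X] [T2Space X] (D : Set (X → X → ℝ))
    (hps : ∀ d ∈ D, (∀ x, d x x = 0) ∧ (∀ x y, d x y = d y x) ∧
      (∀ x y z, d x z ≤ d x y + d y z))
    (hsep : ∀ x y : X, x ≠ y → ∃ d ∈ D, 0 < d x y)
    (hdir : ∀ d₁ ∈ D, ∀ d₂ ∈ D, ∃ d₃ ∈ D, ∀ x y, max (d₁ x y) (d₂ x y) ≤ d₃ x y)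
    (hadm : TopologicalSpace.generateFrom
      {U : Set X | ∃ d ∈ D, ∃ x : X, ∃ ε : ℝ, 0 < ε ∧ U = {y | d x y < ε}} = t) :
    TopologicalSpace.generateFrom
        ({S : Set {K : Set X // K.Nonempty ∧ IsCompact K} |
            ∃ U : Set X, IsOpen U ∧ S = {K | K.1 ⊆ U}} ∪
          {S : Set {K : Set X // K.Nonempty ∧ IsCompact K} |
            ∃ U : Set X, IsOpen U ∧ S = {K | (K.1 ∩ U).Nonempty}}) =
      TopologicalSpace.generateFrom
        {S : Set {K : Set X // K.Nonempty ∧ IsCompact K} |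
          ∃ d ∈ D, ∃ K₀ : {K : Set X // K.Nonempty ∧ IsCompact K}, ∃ ε : ℝ≥0∞,
            0 < ε ∧ ε ≠ ⊤ ∧ S = {L | hausd d K₀.1 L.1 < ε}} :=
  directed_multimetric_hausdorff_generates_vietoris_general (t := t) D hps hdir hadm
end

section
/- Consider X = ℝ^ω with the product topology and the map f : X → X given by f((x_n)) = ((1/2)x_n). Then f is eventually contracting with respect to no continuous metric on X: for every metric d on ℝ^ω that is continuous with respect to the product topology, there exists t > 0 such that dω_{f^n}(t) does not converge to 0. -/
open Filter Topology ENNReal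

/-- The map `(x_n) ↦ ((1/2)·x_n)` on `ℝ^ω`. -/
noncomputable def halfMap : (ℕ → ℝ) → (ℕ → ℝ) := fun x n => x n / 2

/-- The `d`-oscillation of a self-map `g` with respect to a real-valued (pseudo)metric `d`. -/
noncomputable def oscd (d : (ℕ → ℝ) → (ℕ → ℝ) → ℝ) (g : (ℕ → ℝ) → (ℕ → ℝ)) (t : ℝ) :
    ℝ≥0∞ :=
  ⨆ (x : ℕ → ℝ) (y : ℕ → ℝ) (_ : d x y ≤ t), ENNReal.ofReal (d (g x) (g y))

lemma halfMap_iterate (n : ℕ) (x : ℕ → ℝ) :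
    halfMap^[n] x = fun i => x i / 2 ^ n := by
  induction n generalizing x with
  | zero => simp
  | succ n ih =>
    rw [Function.iterate_succ_apply, ih]
    funext i
    simp only [halfMap, pow_succ, div_div]
    ring_nf

/-- The map `f((x_n)) = ((1/2)x_n)` on `ℝ^ω` (with the product topology) is eventually
contracting with respect to no continuous metric: for every continuous metric `d` on `ℝ^ω`
there is `t > 0` such that the oscillations of the iterates `f^[n]` at `t` do not tend to
zero. -/
theorem halfMap_not_eventually_contracting (d : (ℕ → ℝ) → (ℕ → ℝ) → ℝ)
    (hzero : ∀ x y, d x y = 0 ↔ x = y) (hsymm : ∀ x y, d x y = d y x)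
    (htri : ∀ x y z, d x z ≤ d x y + d y z)
    (hcont : Continuous fun p : (ℕ → ℝ) × (ℕ → ℝ) => d p.1 p.2) :
    ∃ t : ℝ, 0 < t ∧
      ¬ Tendsto (fun n => oscd d (halfMap^[n]) t) atTop (𝓝 0) := by
  -- the one-variable function x ↦ d x 0 is continuous
  have hc1 : Continuous fun x : ℕ → ℝ => d x 0 :=
    hcont.comp (continuous_id.prodMk continuous_const)
  have hV : IsOpen {x : ℕ → ℝ | d x 0 < 1} := isOpen_lt hc1 continuous_const
  have h00 : (0 : ℕ → ℝ) ∈ {x : ℕ → ℝ | d x 0 < 1} := by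
    simp [Set.mem_setOf_eq, (hzero 0 0).mpr rfl]
  obtain ⟨I, u, hu, hsub⟩ := (isOpen_pi_iff.mp hV) 0 h00
  -- choose a coordinate outside I
  set k : ℕ := I.sup id + 1 with hk
  have hkI : k ∉ I := by
    intro h
    have := Finset.le_sup (f := id) h
    simp only [id] at this
    omega
  -- the basic vector e supported at coordinate k
  set e : ℕ → ℝ := fun i => if i = k then 1 else 0 with he
  have hray : ∀ s : ℝ, d (fun i => s * e i) 0 < 1 := by
    intro s
    apply hsub
    intro i hi
    have hik : i ≠ k := fun h => hkI (h ▸ hi)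
    have : (fun i => s * e i) i = 0 := by simp [he, hik]
    rw [this]
    exact (hu i hi).2
  have hene : e ≠ 0 := by
    intro h
    have : e k = 0 := by rw [h]; rfl
    simp [he] at this
  have hc : 0 < d e 0 := by
    have h1 : d e e ≤ d e 0 + d 0 e := htri e 0 e
    have h2 : d e e = 0 := (hzero e e).mpr rfl
    have h3 : d 0 e = d e 0 := hsymm 0 e
    have hne : d e 0 ≠ 0 := fun h => hene ((hzero e 0).mp h)
    cases lt_or_eq_of_le (by linarith : (0:ℝ) ≤ d e 0) with
    | inl h => exact h
    | inr h => exact absurd h.symm hne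
  refine ⟨1, one_pos, fun htend => ?_⟩
  have hpos : (0 : ℝ≥0∞) < ENNReal.ofReal (d e 0) := by
    simpa using ENNReal.ofReal_pos.mpr hc
  have hev := htend (Iio_mem_nhds hpos)
  rw [mem_map, mem_atTop_sets] at hev
  obtain ⟨n, hn⟩ := hev
  have hlt : oscd d (halfMap^[n]) 1 < ENNReal.ofReal (d e 0) := hn n le_rfl
  -- but oscd ≥ ofReal (d e 0), via x = 2^n • e, y = 0
  have hge : ENNReal.ofReal (d e 0) ≤ oscd d (halfMap^[n]) 1 := by
    have hx1 : d (fun i => (2 : ℝ) ^ n * e i) 0 ≤ 1 := (hray ((2 : ℝ) ^ n)).le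
    have hgx : halfMap^[n] (fun i => (2 : ℝ) ^ n * e i) = e := by
      rw [halfMap_iterate]
      funext i
      field_simp
    have hgy : halfMap^[n] (0 : ℕ → ℝ) = 0 := by
      rw [halfMap_iterate]
      funext i
      simp
    calc ENNReal.ofReal (d e 0)
        = ENNReal.ofReal (d (halfMap^[n] (fun i => (2 : ℝ) ^ n * e i))
            (halfMap^[n] (0 : ℕ → ℝ))) := by rw [hgx, hgy]
      _ ≤ oscd d (halfMap^[n]) 1 := by
          exact le_iSup_of_le (fun i => (2 : ℝ) ^ n * e i)
            (le_iSup_of_le 0 (le_iSup_of_le hx1 le_rfl))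
  exact absurd hlt (not_lt.mpr hge)
end

section
/- Let F be a finite family of self-maps of a set X with a bounded metric d, suppose F is eventually contracting (dω_{F^n}(t) → 0 for all t > 0), and fix a strictly increasing sequence (α_n) with α_0 = 1 and sup_n α_n ≤ 2. Define d̂(x,y) = sup_n max_{f∈F^n} α_n d(f(x),f(y)). Then F is Krasnoselskiĭ contracting with respect to d̂: for all 0 < r < R < ∞, sup_{r ≤ t ≤ R} d̂ω_F(t)/t < 1. -/
open Filter Topology ENNReal

/-- If `(X,d)` is a bounded metric space and `F` is an eventually contracting finite family of
self-maps, then `F` is Krasnoselskiĭ contracting with respect to the pseudometric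
`d̂(x,y) = sup_n max_{f ∈ F^n} α_n · d(f x, f y)`. -/
theorem dhat_krasnoselskii {X : Type*} [MetricSpace X]
    (hbd : EMetric.diam (Set.univ : Set X) ≠ ⊤)
    (F : Set (X → X)) (hfin : F.Finite)
    (hev : ∀ t : ℝ≥0∞, 0 < t → t ≠ ⊤ →
      Tendsto (fun n => oscFam (comps F n) t) atTop (𝓝 0))
    (α : ℕ → ℝ≥0∞) (hα0 : α 0 = 1) (hαmono : StrictMono α) (hα2 : ∀ n, α n ≤ 2) :
    let dhat : X → X → ℝ≥0∞ := fun x y => ⨆ n, ⨆ f ∈ comps F n, α n * edist (f x) (f y)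
    ∀ r R : ℝ≥0∞, 0 < r → r < R → R ≠ ⊤ →
      (⨆ t ∈ Set.Icc r R,
        (⨆ f ∈ F, ⨆ (x : X) (y : X) (_ : dhat x y ≤ t), dhat (f x) (f y)) / t) < 1 := by
  intro dhat r R hr hrR hRtop
  have hα1 : ∀ n, 1 ≤ α n := fun n => hα0 ▸ hαmono.monotone (Nat.zero_le n)
  have hαtop : ∀ n, α n ≠ ⊤ := fun n => ne_top_of_le_ne_top (by norm_num) (hα2 n)
  have hαne0 : ∀ n, α n ≠ 0 := fun n =>
    ne_of_gt (lt_of_lt_of_le zero_lt_one (hα1 n))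
  have hRpos : 0 < R := hr.trans hrR
  have hr4 : 0 < r / 4 := ENNReal.div_pos hr.ne' (by norm_num)
  obtain ⟨k, hk⟩ := (Filter.eventually_atTop).mp
    ((hev R hRpos hRtop).eventually (gt_mem_nhds hr4))
  set lam : ℝ≥0∞ := (Finset.range k).sup (fun m => α m / α (m + 1)) with hlam
  have hlam1 : lam < 1 := by
    refine (Finset.sup_lt_iff (by norm_num)).mpr fun m _ => ?_
    rw [ENNReal.div_lt_iff (Or.inl (hαne0 (m + 1))) (Or.inl (hαtop (m + 1))), one_mul]
    exact hαmono (Nat.lt_succ_self m)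
  set c := max lam 2⁻¹ with hc
  have hc1 : c < 1 := max_lt hlam1 (by norm_num)
  have hdhat_le : ∀ n (g : X → X), g ∈ comps F n → ∀ x y : X,
      α n * edist (g x) (g y) ≤ dhat x y := by
    intro n g hg x y
    exact le_iSup_of_le n (le_iSup₂_of_le g hg le_rfl)
  have hedist_le : ∀ x y : X, edist x y ≤ dhat x y := by
    intro x y
    have h := hdhat_le 0 id rfl x y
    simpa [hα0] using h
  refine lt_of_le_of_lt ?_ hc1
  refine iSup₂_le fun t ht => ?_
  have ht0 : t ≠ 0 := (hr.trans_le ht.1).ne'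
  have httop : t ≠ ⊤ := (lt_of_le_of_lt ht.2 (lt_top_iff_ne_top.mpr hRtop)).ne
  rw [ENNReal.div_le_iff ht0 httop]
  refine iSup₂_le fun f hf => iSup_le fun x => iSup_le fun y => iSup_le fun hxy => ?_
  refine iSup_le fun n => iSup₂_le fun g hg => ?_
  have hgf : g ∘ f ∈ comps F (n + 1) := Set.mem_image2_of_mem hg hf
  by_cases hn : n < k
  · have h1 : α (n + 1) * edist ((g ∘ f) x) ((g ∘ f) y) ≤ t :=
      (hdhat_le (n + 1) _ hgf x y).trans hxy
    have heq : α n * edist (g (f x)) (g (f y)) =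
        (α n / α (n + 1)) * (α (n + 1) * edist ((g ∘ f) x) ((g ∘ f) y)) := by
      rw [← mul_assoc, ENNReal.div_mul_cancel (hαne0 (n + 1)) (hαtop (n + 1))]
      rfl
    rw [heq]
    calc (α n / α (n + 1)) * (α (n + 1) * edist ((g ∘ f) x) ((g ∘ f) y))
        ≤ lam * t := mul_le_mul' (Finset.le_sup (f := fun m => α m / α (m + 1)) (Finset.mem_range.mpr hn)) h1
      _ ≤ c * t := mul_le_mul_left (le_max_left _ _) t
  · push_neg at hn
    have hxyR : edist x y ≤ R := (hedist_le x y).trans (hxy.trans ht.2)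
    have hosc : edist ((g ∘ f) x) ((g ∘ f) y) ≤ oscFam (comps F (n + 1)) R := by
      unfold oscFam
      exact le_iSup₂_of_le (g ∘ f) hgf
        (le_iSup_of_le x (le_iSup_of_le y (le_iSup_of_le hxyR le_rfl)))
    have hk' := hk (n + 1) (by omega)
    have h2 : α n * edist (g (f x)) (g (f y)) ≤ 2 * (r / 4) :=
      mul_le_mul' (hα2 n) (hosc.trans hk'.le)
    refine h2.trans ?_
    have h3 : (2 : ℝ≥0∞) * (r / 4) = 2⁻¹ * r := by
      rw [ENNReal.div_eq_inv_mul, ← mul_assoc]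
      congr 1
      rw [show (4 : ℝ≥0∞) = 2 * 2 by norm_num,
        ENNReal.mul_inv (by norm_num) (by norm_num), ← mul_assoc,
        ENNReal.mul_inv_cancel (by norm_num) (by norm_num), one_mul]
    rw [h3]
    calc (2 : ℝ≥0∞)⁻¹ * r ≤ 2⁻¹ * t := mul_le_mul_right ht.1 _
      _ ≤ c * t := mul_le_mul_left (le_max_right _ _) t
end
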